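/- Define T = t, X₁ = -(B/6)t² + x₁, X₂ = -(B/3)t + x₂, X₃ = x₃/(1 - (B/3)x₃), X₄ = (1+x₄)/(1 - (B/3)x₃)³ - 1, X₅ = x₅/(1 - (B/3)x₃)⁴ + B(1+x₄)²/(1 - (B/3)x₃)⁵ - B, as germs at 0 ∈ ℝ⁶ (coordinates t, x₁, x₂, x₃, x₄, x₅). Then the differential d(T,X₁,...,X₅) applied to the vector field [x₃, x₂x₃, 1, 1+x₄, x₅, 0]ᵀ equals (1 - (B/3)x₃)·[X₃, X₂X₃, 1, 1+X₄, B+X₅, 0]ᵀ + (∗)∂/∂x₅ for some function (∗); in particular the first five components of the identity hold exactly. -/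

import Mathlib

/-- ℝ⁶ with coordinates t, x₁, x₂, x₃, x₄, x₅ (indices 0,…,5). -/
abbrev E6 := Fin 6 → ℝ

/-- The Cheaito–Mormul coordinate change with constant B:
T = t, X₁ = -(B/6)t² + x₁, X₂ = -(B/3)t + x₂, X₃ = x₃/(1-(B/3)x₃),
X₄ = (1+x₄)/(1-(B/3)x₃)³ - 1,
X₅ = x₅/(1-(B/3)x₃)⁴ + B(1+x₄)²/(1-(B/3)x₃)⁵ - B. -/
noncomputable def Phi (B : ℝ) : E6 → E6 := fun v =>
  ![v 0,
    -(B / 6) * v 0 ^ 2 + v 1,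
    -(B / 3) * v 0 + v 2,
    v 3 * ((1 - B / 3 * v 3)⁻¹),
    (1 + v 4) * ((1 - B / 3 * v 3)⁻¹) ^ 3 - 1,
    v 5 * ((1 - B / 3 * v 3)⁻¹) ^ 4 + B * (1 + v 4) ^ 2 * ((1 - B / 3 * v 3)⁻¹) ^ 5 - B]

/-- The Goursat vector field `x₃∂_t + x₂x₃∂_{x₁} + ∂_{x₂} + (1+x₄)∂_{x₃} + x₅∂_{x₄}`. -/
noncomputable def W : E6 → E6 := fun v => ![v 3, v 2 * v 3, 1, 1 + v 4, v 5, 0]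

/-- Its counterpart with constant B: `X₃∂_t + X₂X₃∂_{x₁} + ∂_{x₂} + (1+X₄)∂_{x₃} + (B+X₅)∂_{x₄}`. -/
noncomputable def W' (B : ℝ) : E6 → E6 := fun u => ![u 3, u 2 * u 3, 1, 1 + u 4, B + u 5, 0]

/-! The only non-polynomial ingredient of `Phi B` is `r = (1 - (B/3)x₃)⁻¹`, whose derivative
along `W` is `(B/3)(1 + x₄) r²`. Writing `d = r⁻¹` and clearing denominators, each of the first
five components of the identity becomes a polynomial identity modulo `d = 1 - (B/3)x₃`. -/

open ContinuousLinearMap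

section

variable {B : ℝ} {v : E6}

lemma hasFDerivAt_inv_one_sub_mul_apply (hv : 1 - B / 3 * v 3 ≠ 0) :
    HasFDerivAt (fun x : E6 => (1 - B / 3 * x 3)⁻¹)
      ((B / 3 * (1 - B / 3 * v 3)⁻¹ ^ 2) • proj (R := ℝ) (φ := fun _ : Fin 6 => ℝ) 3) v := by
  refine ((hasFDerivAt_inv hv).comp v
    (((hasFDerivAt_apply (𝕜 := ℝ) 3 v).const_mul (B / 3)).const_sub 1)).congr_fderiv ?_
  ext w
  simp
  ring

lemma differentiableAt_Phi (hv : 1 - B / 3 * v 3 ≠ 0) : DifferentiableAt ℝ (Phi B) v := by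
  rw [differentiableAt_pi]
  intro i
  fin_cases i <;> simp [Phi] <;> fun_prop (disch := simp [hv])

lemma fderiv_Phi_coord_apply_W (hv : 1 - B / 3 * v 3 ≠ 0) (i : Fin 6) (hi : (i : ℕ) < 5) :
    fderiv ℝ (fun x => Phi B x i) v (W v) = (1 - B / 3 * v 3) * W' B (Phi B v) i := by
  have hr := hasFDerivAt_inv_one_sub_mul_apply hv
  have hp (j : Fin 6) := hasFDerivAt_apply (𝕜 := ℝ) j v
  have h0 : HasFDerivAt (fun x => Phi B x 0) _ v := hp 0
  have h1 : HasFDerivAt (fun x => Phi B x 1) _ v :=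
    (((hp 0).pow 2).const_mul (-(B / 6))).add (hp 1)
  have h2 : HasFDerivAt (fun x => Phi B x 2) _ v := ((hp 0).const_mul (-(B / 3))).add (hp 2)
  have h3 : HasFDerivAt (fun x => Phi B x 3) _ v := (hp 3).mul hr
  have h4 : HasFDerivAt (fun x => Phi B x 4) _ v :=
    (((hp 4).const_add 1).mul (hr.pow 3)).sub_const 1
  fin_cases i <;> simp only [Fin.zero_eta, Fin.mk_one, Fin.reduceFinMk, lt_self_iff_false] at hi ⊢
  all_goals
    simp only [h0.fderiv, h1.fderiv, h2.fderiv, h3.fderiv, h4.fderiv]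
    simp [W, W', Phi]
    -- with `d` atomic, `field_simp` finds `hv : d ≠ 0` instead of renormalizing `1 - B / 3 * v 3`
    set d := 1 - B / 3 * v 3 with hd
    field_simp
  · ring
  · linear_combination -3 * hd
  · linear_combination 3 * (1 + v 4) * hd
  · ring

end

/-- The differential of Phi applied to W equals `(1 - (B/3)x₃)` times W'
evaluated at Phi, up to a term in ∂/∂x₅: the first five components of the
identity hold exactly (near 0). -/
theorem goursat_conjugacy_CM (B : ℝ) :
    ∀ᶠ v : E6 in nhds 0, ∀ i : Fin 6, (i : ℕ) < 5 →
      fderiv ℝ (Phi B) v (W v) i = (1 - B / 3 * v 3) * W' B (Phi B v) i := by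
  have hden : Continuous (fun v : E6 => 1 - B / 3 * v 3) := by fun_prop
  have hden0 : (1 : ℝ) - B / 3 * (0 : E6) 3 ≠ 0 := by simp
  filter_upwards [hden.continuousAt.eventually_ne hden0] with v hv i hi
  rw [← fderiv_Phi_coord_apply_W hv i hi, fderiv_apply (differentiableAt_Phi hv) i]
  rfl
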